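/- Let k ≥ 1, m ∈ ℝ^k, and let f, ℓ : ℝ^k → [0,∞) be measurable functions, neither of which is almost everywhere zero. Let δ := {K ∈ ℝ^k : ∫_{ℝ^k} e^{-⟨K,x⟩} f(x) dx < ∞ and ∫_{ℝ^k} e^{⟨K,x⟩} ℓ(x) dx < ∞}. Then δ is convex and the damping objective υ(K) := −k·log(2π) + ⟨K,m⟩ + log ∫_{ℝ^k} e^{-⟨K,x⟩} f(x) dx + log ∫_{ℝ^k} e^{⟨K,x⟩} ℓ(x) dx is a convex function of K on δ. -/

import Mathlib

open MeasureTheory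

variable {k : ℕ}

local notation "E" => EuclideanSpace ℝ (Fin k)

lemma exp_inner_meas (K : E) {g : E → ℝ} (hg : Measurable g) :
    Measurable (fun x : E => Real.exp (inner ℝ K x : ℝ) * g x) :=
  ((Real.continuous_exp.comp (continuous_const.inner continuous_id)).measurable).mul hg

-- pointwise identity
lemma ptwise {g : E → ℝ} (hgnn : ∀ x, 0 ≤ g x) (K₁ K₂ : E) {a b : ℝ}
    (ha : 0 < a) (hb : 0 < b) (hab : a + b = 1) (x : E) :
    ENNReal.ofReal (Real.exp (inner ℝ (a • K₁ + b • K₂) x : ℝ) * g x) =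
      (ENNReal.ofReal (Real.exp (inner ℝ K₁ x : ℝ) * g x)) ^ a *
      (ENNReal.ofReal (Real.exp (inner ℝ K₂ x : ℝ) * g x)) ^ b := by
  have hn : ∀ (K : E), 0 ≤ Real.exp (inner ℝ K x : ℝ) * g x :=
    fun K => mul_nonneg (Real.exp_pos _).le (hgnn x)
  rw [ENNReal.ofReal_rpow_of_nonneg (hn K₁) ha.le,
    ENNReal.ofReal_rpow_of_nonneg (hn K₂) hb.le,
    ← ENNReal.ofReal_mul (Real.rpow_nonneg (hn K₁) a)]
  congr 1
  have h1 : inner ℝ (a • K₁ + b • K₂) x = a * (inner ℝ K₁ x : ℝ) + b * (inner ℝ K₂ x : ℝ) := by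
    simp [inner_add_left, real_inner_smul_left, Finset.mul_sum]
  rcases eq_or_lt_of_le (hgnn x) with h | h
  · rw [← h]
    simp [Real.zero_rpow ha.ne', Real.zero_rpow hb.ne']
  · have hg1 : g x ^ a * g x ^ b = g x := by
      rw [← Real.rpow_add h, hab, Real.rpow_one]
    rw [mul_comm a (inner ℝ K₁ x : ℝ), mul_comm b (inner ℝ K₂ x : ℝ)] at h1
    rw [Real.mul_rpow (Real.exp_pos _).le (hgnn x), Real.mul_rpow (Real.exp_pos _).le (hgnn x),
      ← Real.exp_mul, ← Real.exp_mul, h1, Real.exp_add]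
    linear_combination -Real.exp ((inner ℝ K₁ x : ℝ) * a) * Real.exp ((inner ℝ K₂ x : ℝ) * b) * hg1

lemma holder_step {g : E → ℝ} (hg : Measurable g) (hgnn : ∀ x, 0 ≤ g x) {K₁ K₂ : E}
    (h₁ : Integrable (fun x : E => Real.exp (inner ℝ K₁ x : ℝ) * g x))
    (h₂ : Integrable (fun x : E => Real.exp (inner ℝ K₂ x : ℝ) * g x))
    {a b : ℝ} (ha : 0 < a) (hb : 0 < b) (hab : a + b = 1) :
    Integrable (fun x : E => Real.exp (inner ℝ (a • K₁ + b • K₂) x : ℝ) * g x) ∧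
    ∫ x : E, Real.exp (inner ℝ (a • K₁ + b • K₂) x : ℝ) * g x ≤
      (∫ x : E, Real.exp (inner ℝ K₁ x : ℝ) * g x) ^ a *
      (∫ x : E, Real.exp (inner ℝ K₂ x : ℝ) * g x) ^ b := by
  set F₁ : E → ENNReal := fun x => ENNReal.ofReal (Real.exp (inner ℝ K₁ x : ℝ) * g x) with hF₁def
  set F₂ : E → ENNReal := fun x => ENNReal.ofReal (Real.exp (inner ℝ K₂ x : ℝ) * g x) with hF₂def
  have hnn : ∀ (K : E) (x : E), 0 ≤ Real.exp (inner ℝ K x : ℝ) * g x :=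
    fun K x => mul_nonneg (Real.exp_pos _).le (hgnn x)
  have hm : ∀ K : E, Measurable fun x : E => ENNReal.ofReal (Real.exp (inner ℝ K x : ℝ) * g x) :=
    fun K => ENNReal.measurable_ofReal.comp (exp_inner_meas K hg)
  have hfin₁ : ∫⁻ x, F₁ x < ⊤ := by
    rw [← hasFiniteIntegral_iff_ofReal (Filter.Eventually.of_forall (hnn K₁))]
    exact h₁.hasFiniteIntegral
  have hfin₂ : ∫⁻ x, F₂ x < ⊤ := by
    rw [← hasFiniteIntegral_iff_ofReal (Filter.Eventually.of_forall (hnn K₂))]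
    exact h₂.hasFiniteIntegral
  have hpq : Real.HolderConjugate (1/a) (1/b) := by
    exact Real.holderConjugate_one_div ha hb hab
  have key := ENNReal.lintegral_mul_le_Lp_mul_Lq volume hpq
    (((hm K₁).pow measurable_const).aemeasurable)
    (((hm K₂).pow measurable_const).aemeasurable)
    (f := fun x => F₁ x ^ a) (g := fun x => F₂ x ^ b)
  have hsimp₁ : ∀ x : E, (F₁ x ^ a) ^ (1/a) = F₁ x := by
    intro x
    rw [← ENNReal.rpow_mul, mul_one_div_cancel ha.ne', ENNReal.rpow_one]
  have hsimp₂ : ∀ x : E, (F₂ x ^ b) ^ (1/b) = F₂ x := by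
    intro x
    rw [← ENNReal.rpow_mul, mul_one_div_cancel hb.ne', ENNReal.rpow_one]
  simp only [hsimp₁, hsimp₂, one_div_one_div] at key
  have hptwise : (fun x : E => ENNReal.ofReal (Real.exp (inner ℝ (a • K₁ + b • K₂) x : ℝ) * g x))
      = fun x => F₁ x ^ a * F₂ x ^ b := funext fun x => ptwise hgnn K₁ K₂ ha hb hab x
  have keyL : ∫⁻ x, ENNReal.ofReal (Real.exp (inner ℝ (a • K₁ + b • K₂) x : ℝ) * g x) ≤
      (∫⁻ x, F₁ x) ^ a * (∫⁻ x, F₂ x) ^ b := by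
    rw [hptwise]; exact key
  have hRfin : (∫⁻ x, F₁ x) ^ a * (∫⁻ x, F₂ x) ^ b < ⊤ :=
    ENNReal.mul_lt_top (ENNReal.rpow_lt_top_of_nonneg ha.le hfin₁.ne)
      (ENNReal.rpow_lt_top_of_nonneg hb.le hfin₂.ne)
  have hint : Integrable (fun x : E => Real.exp (inner ℝ (a • K₁ + b • K₂) x : ℝ) * g x) := by
    refine ⟨(exp_inner_meas _ hg).aestronglyMeasurable, ?_⟩
    rw [hasFiniteIntegral_iff_ofReal (Filter.Eventually.of_forall (hnn _))]
    exact lt_of_le_of_lt keyL hRfin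
  refine ⟨hint, ?_⟩
  rw [integral_eq_lintegral_of_nonneg_ae (Filter.Eventually.of_forall (hnn _))
      (exp_inner_meas _ hg).aestronglyMeasurable,
    integral_eq_lintegral_of_nonneg_ae (Filter.Eventually.of_forall (hnn K₁))
      (exp_inner_meas _ hg).aestronglyMeasurable,
    integral_eq_lintegral_of_nonneg_ae (Filter.Eventually.of_forall (hnn K₂))
      (exp_inner_meas _ hg).aestronglyMeasurable]
  rw [ENNReal.toReal_rpow, ENNReal.toReal_rpow, ← ENNReal.toReal_mul]
  exact ENNReal.toReal_mono hRfin.ne keyL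

lemma int_pos {g : E → ℝ} (hgnn : ∀ x, 0 ≤ g x)
    (hgne : ¬ (∀ᵐ x : E ∂volume, g x = 0)) (K : E)
    (hK : Integrable (fun x : E => Real.exp (inner ℝ K x : ℝ) * g x)) :
    0 < ∫ x : E, Real.exp (inner ℝ K x : ℝ) * g x := by
  rw [integral_pos_iff_support_of_nonneg
    (fun x => mul_nonneg (Real.exp_pos _).le (hgnn x)) hK]
  have hsupp : (Function.support fun x : E => Real.exp (inner ℝ K x : ℝ) * g x)
      = Function.support g := by
    ext x
    simp [Function.mem_support, (Real.exp_pos (inner ℝ K x : ℝ)).ne']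
  rw [hsupp]
  rw [Filter.eventually_iff, mem_ae_iff] at hgne
  have : {x : E | ¬ g x = 0} = Function.support g := rfl
  simp only [Set.compl_setOf, not_not] at hgne
  exact (pos_iff_ne_zero.mpr (fun h => hgne (by simpa [Function.support] using h)))

lemma setConvexG {g : E → ℝ} (hg : Measurable g) (hgnn : ∀ x, 0 ≤ g x) :
    Convex ℝ {K : E | Integrable (fun x : E => Real.exp (inner ℝ K x : ℝ) * g x)} := by
  intro K₁ h₁ K₂ h₂ a b ha hb hab
  rcases ha.eq_or_lt with rfl | ha'
  · have hb1 : b = 1 := by linarith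
    simpa [hb1] using h₂
  rcases hb.eq_or_lt with rfl | hb'
  · have ha1 : a = 1 := by linarith
    simpa [ha1] using h₁
  exact (holder_step hg hgnn h₁ h₂ ha' hb' hab).1

lemma logConvexG {g : E → ℝ} (hg : Measurable g) (hgnn : ∀ x, 0 ≤ g x)
    (hgne : ¬ (∀ᵐ x : E ∂volume, g x = 0)) :
    ConvexOn ℝ {K : E | Integrable (fun x : E => Real.exp (inner ℝ K x : ℝ) * g x)}
      (fun K : E => Real.log (∫ x : E, Real.exp (inner ℝ K x : ℝ) * g x)) := by
  refine ⟨setConvexG hg hgnn, ?_⟩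
  intro K₁ h₁ K₂ h₂ a b ha hb hab
  rcases ha.eq_or_lt with rfl | ha'
  · have hb1 : b = 1 := by linarith
    simp [hb1]
  rcases hb.eq_or_lt with rfl | hb'
  · have ha1 : a = 1 := by linarith
    simp [ha1]
  obtain ⟨hint, hle⟩ := holder_step hg hgnn h₁ h₂ ha' hb' hab
  have p1 := int_pos hgnn hgne K₁ h₁
  have p2 := int_pos hgnn hgne K₂ h₂
  have pc := int_pos hgnn hgne _ hint
  calc Real.log (∫ x : E, Real.exp (inner ℝ (a • K₁ + b • K₂) x : ℝ) * g x)
      ≤ Real.log ((∫ x : E, Real.exp (inner ℝ K₁ x : ℝ) * g x) ^ a *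
          (∫ x : E, Real.exp (inner ℝ K₂ x : ℝ) * g x) ^ b) := Real.log_le_log pc hle
    _ = a • Real.log (∫ x : E, Real.exp (inner ℝ K₁ x : ℝ) * g x) +
        b • Real.log (∫ x : E, Real.exp (inner ℝ K₂ x : ℝ) * g x) := by
        rw [Real.log_mul (Real.rpow_pos_of_pos p1 a).ne' (Real.rpow_pos_of_pos p2 b).ne',
          Real.log_rpow p1, Real.log_rpow p2]
        simp [smul_eq_mul]

lemma convexOn_comp_neg {S : Set E} {φ : E → ℝ} (h : ConvexOn ℝ S φ) :
    ConvexOn ℝ (Neg.neg ⁻¹' S) (fun K : E => φ (-K)) := by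
  constructor
  · intro x hx y hy a b ha hb hab
    have := h.1 hx hy ha hb hab
    simpa [smul_neg, neg_add, add_comm] using this
  · intro x hx y hy a b ha hb hab
    have := h.2 hx hy ha hb hab
    simpa [smul_neg, neg_add, add_comm] using this

/-- Admissible damping domain: both damped integrals are finite. -/
def dampDom {k : ℕ} (f ℓ : EuclideanSpace ℝ (Fin k) → ℝ) :
    Set (EuclideanSpace ℝ (Fin k)) :=
  {K | Integrable (fun x : EuclideanSpace ℝ (Fin k) => Real.exp (-(inner ℝ K x : ℝ)) * f x) ∧
       Integrable (fun x : EuclideanSpace ℝ (Fin k) => Real.exp (inner ℝ K x : ℝ) * ℓ x)}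

/-- Convexity of the optimal-damping objective. -/
theorem stmt_4 (k : ℕ) (hk : 1 ≤ k) (m : EuclideanSpace ℝ (Fin k))
    (f ℓ : EuclideanSpace ℝ (Fin k) → ℝ)
    (hfmeas : Measurable f) (hfnn : ∀ x, 0 ≤ f x)
    (hfne : ¬ (∀ᵐ x : EuclideanSpace ℝ (Fin k) ∂volume, f x = 0))
    (hℓmeas : Measurable ℓ) (hℓnn : ∀ x, 0 ≤ ℓ x)
    (hℓne : ¬ (∀ᵐ x : EuclideanSpace ℝ (Fin k) ∂volume, ℓ x = 0)) :
    Convex ℝ (dampDom f ℓ) ∧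
    ConvexOn ℝ (dampDom f ℓ) (fun K =>
      -(k : ℝ) * Real.log (2 * Real.pi) + (inner ℝ K m : ℝ) +
      Real.log (∫ x : EuclideanSpace ℝ (Fin k), Real.exp (-(inner ℝ K x : ℝ)) * f x) +
      Real.log (∫ x : EuclideanSpace ℝ (Fin k), Real.exp (inner ℝ K x : ℝ) * ℓ x)) := by
  set Sf : Set (EuclideanSpace ℝ (Fin k)) := {K : (EuclideanSpace ℝ (Fin k)) | Integrable (fun x : (EuclideanSpace ℝ (Fin k)) => Real.exp (inner ℝ K x : ℝ) * f x)} with hSf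
  set Sl : Set (EuclideanSpace ℝ (Fin k)) := {K : (EuclideanSpace ℝ (Fin k)) | Integrable (fun x : (EuclideanSpace ℝ (Fin k)) => Real.exp (inner ℝ K x : ℝ) * ℓ x)} with hSl
  have hEqSet : dampDom f ℓ = (Neg.neg ⁻¹' Sf) ∩ Sl := by
    ext K
    simp only [dampDom, Set.mem_setOf_eq, Set.mem_inter_iff, Set.mem_preimage, hSf, hSl,
      inner_neg_left]
  have hconvSf := setConvexG hfmeas hfnn
  have hconvSl := setConvexG hℓmeas hℓnn
  have hconvNegSf : Convex ℝ (Neg.neg ⁻¹' Sf) :=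
    (convexOn_comp_neg (convexOn_const (0:ℝ) hconvSf)).1
  have hconvDom : Convex ℝ (dampDom f ℓ) := by
    rw [hEqSet]; exact hconvNegSf.inter hconvSl
  have hsub1 : dampDom f ℓ ⊆ Neg.neg ⁻¹' Sf := by
    rw [hEqSet]; exact Set.inter_subset_left
  have hsub2 : dampDom f ℓ ⊆ Sl := by
    rw [hEqSet]; exact Set.inter_subset_right
  have hφf : ConvexOn ℝ (dampDom f ℓ)
      (fun K : (EuclideanSpace ℝ (Fin k)) => Real.log (∫ x : EuclideanSpace ℝ (Fin k), Real.exp (-(inner ℝ K x : ℝ)) * f x)) := by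
    have h := (convexOn_comp_neg (logConvexG hfmeas hfnn hfne)).subset hsub1 hconvDom
    simpa only [inner_neg_left] using h
  have hφl : ConvexOn ℝ (dampDom f ℓ)
      (fun K : (EuclideanSpace ℝ (Fin k)) => Real.log (∫ x : EuclideanSpace ℝ (Fin k), Real.exp (inner ℝ K x : ℝ) * ℓ x)) :=
    (logConvexG hℓmeas hℓnn hℓne).subset hsub2 hconvDom
  have haff : ConvexOn ℝ (dampDom f ℓ)
      (fun K : (EuclideanSpace ℝ (Fin k)) => -(k : ℝ) * Real.log (2 * Real.pi) + (inner ℝ K m : ℝ)) := by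
    refine ⟨hconvDom, ?_⟩
    intro x hx y hy a b ha hb hab
    have hinner : (inner ℝ (a • x + b • y) m : ℝ) = a * (inner ℝ x m : ℝ) + b * (inner ℝ y m : ℝ) := by
      simp [inner_add_left, real_inner_smul_left, Finset.mul_sum, mul_assoc]
    dsimp only
    rw [smul_eq_mul, smul_eq_mul, hinner]
    refine le_of_eq ?_
    linear_combination ((k : ℝ) * Real.log (2 * Real.pi)) * hab
  exact ⟨hconvDom, (haff.add hφf).add hφl⟩
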